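/- For every i > 1, the Fibonacci number F(i) is a Hippasus number whose unique Hippasus successor is F(i+1): F(i+1) ≥ F(i), F(i)(F(i)+F(i+1)) − F(i+1)² = ±1, and any α ≥ F(i) with F(i)(F(i)+α) − α² = ±1 satisfies α = F(i+1). -/
import Mathlib


/-- Fibonacci numbers with F(0)=1, F(1)=1, F(n)=F(n-2)+F(n-1). -/
def F : ℕ → ℤ
  | 0 => 1
  | 1 => 1
  | n + 2 => F n + F (n + 1)

/-- `α` is a Hippasus successor of `β`: `α ≥ β` and `β(β+α) − α² = ±1`. -/
def IsHipSucc (β α : ℤ) : Prop :=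
  α ≥ β ∧ (β * (β + α) - α ^ 2 = 1 ∨ β * (β + α) - α ^ 2 = -1)

/-- `β` is a Hippasus number: a positive integer having a Hippasus successor. -/
def Hippasus (β : ℤ) : Prop := 0 < β ∧ ∃ α : ℤ, IsHipSucc β α

lemma F_pos : ∀ n, 1 ≤ F n
  | 0 => le_refl 1
  | 1 => le_refl 1
  | n + 2 => by
    have h1 := F_pos n
    have h2 := F_pos (n + 1)
    show 1 ≤ F n + F (n + 1)
    omega

lemma F_mono (n : ℕ) : F n ≤ F (n + 1) := by
  cases n with
  | zero => simp [F]
  | succ m =>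
    have := F_pos m
    show F (m + 1) ≤ F m + F (m + 1)
    omega

lemma F_id : ∀ n, F n * (F n + F (n + 1)) - F (n + 1) ^ 2 = 1 ∨
    F n * (F n + F (n + 1)) - F (n + 1) ^ 2 = -1
  | 0 => by left; norm_num [F]
  | n + 1 => by
    have h := F_id n
    have hF : F (n + 2) = F n + F (n + 1) := rfl
    rcases h with h | h
    · right; rw [hF]; nlinarith
    · left; rw [hF]; nlinarith

lemma succ_unique {β α α' : ℤ} (hβ : 2 ≤ β) (h1 : IsHipSucc β α)
    (h2 : IsHipSucc β α') : α = α' := by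
  obtain ⟨ha, e1⟩ := h1
  obtain ⟨hb, e2⟩ := h2
  by_contra hne
  rcases lt_or_gt_of_ne hne with h | h
  · rcases e1 with e1 | e1 <;> rcases e2 with e2 | e2 <;> nlinarith
  · rcases e1 with e1 | e1 <;> rcases e2 with e2 | e2 <;> nlinarith

lemma F_ge_two (i : ℕ) (hi : i > 1) : 2 ≤ F i := by
  obtain ⟨k, rfl⟩ : ∃ k, i = k + 2 := ⟨i - 2, by omega⟩
  have := F_pos k
  have := F_pos (k + 1)
  show 2 ≤ F k + F (k + 1)
  omega

theorem fib_unique_successor (i : ℕ) (hi : i > 1) :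
    F (i + 1) ≥ F i ∧ IsHipSucc (F i) (F (i + 1)) ∧
    ∀ α : ℤ, IsHipSucc (F i) α → α = F (i + 1) := by
  have hmono := F_mono i
  have hsucc : IsHipSucc (F i) (F (i + 1)) := ⟨hmono, F_id i⟩
  exact ⟨hmono, hsucc, fun α hα => succ_unique (F_ge_two i hi) hα hsucc⟩
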